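/- arXiv:2605.21197 — 4 statements merged into one kernel-verified Lean document; each statement's English description precedes it below -/
import Mathlib

section
/- Consistency of the triangular kernel curvature (TKC) estimator. Let (Ω, F, P) be a probability space, λ > 0, and let (Y_i)_{i ≥ 1} be independent real random variables such that Y_i has Lebesgue density f_i. Let (μ_i*)_{i ≥ 1} be real numbers and c > 0 be such that f_i(μ_i*) = c for every i (constant curvature at the target quantiles) and the family {f_i} is equicontinuous at the points μ_i*: for every ε > 0 there exists η > 0 with |f_i(y) − f_i(μ_i*)| ≤ ε whenever |y − μ_i*| ≤ η, for all i. Let (h_n) be positive reals with h_n → 0 and n·h_n → ∞. Define the triangular kernel curvature estimator Ĉ_n := (1/(n λ h_n²)) · Σ_{i=1}^n (h_n − |Y_i − μ_i*|) · 1{|Y_i − μ_i*| < h_n}. Then Ĉ_n → c/λ in probability: for every ε > 0, P(|Ĉ_n − c/λ| > ε) → 0 as n → ∞. -/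
open MeasureTheory Filter ProbabilityTheory

lemma tri_int (H : ℝ) (hH : 0 < H) :
    (∫ z : ℝ, if |z| < H then H - |z| else 0) = H ^ 2 := by
  have h1 : (fun z : ℝ => if |z| < H then H - |z| else 0)
      = Set.indicator (Set.Ioo (-H) H) (fun z => H - |z|) := by
    funext z
    rw [Set.indicator_apply]
    simp only [Set.mem_Ioo, ← abs_lt]
  rw [h1, integral_indicator measurableSet_Ioo, ← MeasureTheory.integral_Ioc_eq_integral_Ioo,
    ← intervalIntegral.integral_of_le (by linarith : -H ≤ H)]
  have i1 : IntervalIntegrable (fun z : ℝ => H - |z|) volume (-H) 0 :=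
    (continuous_const.sub continuous_abs).intervalIntegrable _ _
  have i2 : IntervalIntegrable (fun z : ℝ => H - |z|) volume 0 H :=
    (continuous_const.sub continuous_abs).intervalIntegrable _ _
  rw [← intervalIntegral.integral_add_adjacent_intervals i1 i2]
  have e1 : (∫ z in (-H)..0, (H - |z|)) = ∫ z in (-H)..0, (H + z) := by
    apply intervalIntegral.integral_congr
    intro z hz
    rw [Set.uIcc_of_le (by linarith : -H ≤ 0)] at hz
    show H - |z| = H + z
    rw [abs_of_nonpos hz.2]; ring
  have e2 : (∫ z in (0:ℝ)..H, (H - |z|)) = ∫ z in (0:ℝ)..H, (H - z) := by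
    apply intervalIntegral.integral_congr
    intro z hz
    rw [Set.uIcc_of_le (by linarith : (0:ℝ) ≤ H)] at hz
    show H - |z| = H - z
    rw [abs_of_nonneg hz.1]
  rw [e1, e2]
  have c1 : (∫ z in (-H)..0, (H + z)) = H^2/2 := by
    rw [intervalIntegral.integral_add (intervalIntegrable_const) intervalIntegral.intervalIntegrable_id,
      intervalIntegral.integral_const, integral_id]
    simp; ring
  have c2 : (∫ z in (0:ℝ)..H, (H - z)) = H^2/2 := by
    rw [intervalIntegral.integral_sub (intervalIntegrable_const) intervalIntegral.intervalIntegrable_id,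
      intervalIntegral.integral_const, integral_id]
    simp; ring
  rw [c1, c2]; ring

lemma weighted_tri_bound (φ : ℝ → ℝ) (hφm : Measurable φ) (hφ0 : ∀ y, 0 ≤ φ y)
    (a c ε η H : ℝ) (hε : 0 ≤ ε) (hH : 0 < H) (hHη : H ≤ η)
    (hφ : ∀ y, |y - a| ≤ η → |φ y - c| ≤ ε) :
    |(∫ y : ℝ, φ y * (if |y - a| < H then H - |y - a| else 0)) - c * H ^ 2| ≤ ε * H ^ 2 := by
  set g : ℝ → ℝ := fun y => if |y - a| < H then H - |y - a| else 0 with hgdef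
  show |(∫ y : ℝ, φ y * g y) - c * H ^ 2| ≤ ε * H ^ 2
  have habs : Measurable fun y : ℝ => |y - a| := (measurable_id.sub_const a).abs
  have hgm : Measurable g :=
    Measurable.ite (measurableSet_lt habs measurable_const)
      (measurable_const.sub habs) measurable_const
  have hg0 : ∀ y, 0 ≤ g y := by
    intro y; simp only [hgdef]
    split
    · linarith [le_of_lt ‹|y - a| < H›]
    · exact le_refl 0
  have hgH : ∀ y, g y ≤ H := by
    intro y; simp only [hgdef]
    split
    · have := abs_nonneg (y - a); linarith
    · exact hH.le
  have hgsupp : ∀ y, y ∉ Set.Ioo (a - H) (a + H) → g y = 0 := by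
    intro y hy
    have hn : ¬ |y - a| < H := by
      intro hlt
      rcases abs_lt.1 hlt with ⟨h1, h2⟩
      exact hy ⟨by linarith, by linarith⟩
    simp [hgdef, hn]
  have key_int : ∀ (ψ : ℝ → ℝ) (M : ℝ), Measurable ψ → (∀ y, ‖ψ y‖ ≤ M) →
      (∀ y, y ∉ Set.Ioo (a - H) (a + H) → ψ y = 0) → Integrable ψ := by
    intro ψ M hm hb hs
    have hψ : ψ = Set.indicator (Set.Ioo (a - H) (a + H)) ψ := by
      funext y
      by_cases hy : y ∈ Set.Ioo (a - H) (a + H)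
      · simp [hy]
      · simp [hy, hs y hy]
    rw [hψ, integrable_indicator_iff measurableSet_Ioo]
    exact Measure.integrableOn_of_bounded measure_Ioo_lt_top.ne
      hm.aestronglyMeasurable (ae_of_all _ fun y => hb y)
  have hgint : Integrable g :=
    key_int g H hgm (fun y => by rw [Real.norm_eq_abs, abs_of_nonneg (hg0 y)]; exact hgH y) hgsupp
  have hφbd : ∀ y, g y ≠ 0 → φ y ≤ |c| + ε := by
    intro y hy
    have hlt : |y - a| < H := by
      by_contra hcon
      exact hy (by simp [hgdef, if_neg hcon])
    have := hφ y (le_trans hlt.le hHη)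
    have := abs_le.1 this
    calc φ y ≤ c + ε := by linarith [this.2]
    _ ≤ |c| + ε := by linarith [le_abs_self c]
  have hφgint : Integrable (fun y => φ y * g y) := by
    apply key_int _ ((|c| + ε) * H) (hφm.mul hgm)
    · intro y
      by_cases hy : g y = 0
      · simp [hy]; positivity
      · rw [Real.norm_eq_abs, Pi.mul_apply, abs_mul, abs_of_nonneg (hφ0 y), abs_of_nonneg (hg0 y)]
        exact mul_le_mul (hφbd y hy) (hgH y) (hg0 y) (by positivity)
    · intro y hy; rw [Pi.mul_apply, hgsupp y hy, mul_zero]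
  have hIg : (∫ y, g y) = H ^ 2 := by
    have ht : (∫ y : ℝ, (fun z => if |z| < H then H - |z| else 0) (y - a))
        = ∫ z : ℝ, if |z| < H then H - |z| else 0 :=
      integral_sub_right_eq_self (fun z => if |z| < H then H - |z| else 0) a
    have : (fun y : ℝ => g y) = fun y => (fun z => if |z| < H then H - |z| else 0) (y - a) := rfl
    rw [this, ht, tri_int H hH]
  have hsub : (∫ y, φ y * g y) - c * H ^ 2 = ∫ y, (φ y - c) * g y := by
    rw [← hIg, ← integral_const_mul c g, ← integral_sub hφgint (hgint.const_mul c)]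
    congr 1; funext y; ring
  rw [hsub]
  have hdiffint : Integrable (fun y => (φ y - c) * g y) := by
    have : (fun y => (φ y - c) * g y) = fun y => φ y * g y - c * g y := by funext y; ring
    rw [this]; exact hφgint.sub (hgint.const_mul c)
  calc |∫ y, (φ y - c) * g y| ≤ ∫ y, |(φ y - c) * g y| := by
        rw [← Real.norm_eq_abs]
        exact (norm_integral_le_integral_norm _).trans (le_of_eq (by simp only [Real.norm_eq_abs, abs_mul]))
    _ ≤ ∫ y, ε * g y := by
        apply integral_mono hdiffint.abs (hgint.const_mul ε)
        intro y
        show |(φ y - c) * g y| ≤ ε * g y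
        rw [abs_mul, abs_of_nonneg (hg0 y)]
        by_cases hy : g y = 0
        · simp [hy]
        · have hlt : |y - a| < H := by
            by_contra hcon
            exact hy (by simp [hgdef, if_neg hcon])
          exact mul_le_mul_of_nonneg_right (hφ y (le_trans hlt.le hHη)) (hg0 y)
    _ = ε * H ^ 2 := by rw [integral_const_mul, hIg]

/-- **Consistency of the triangular kernel curvature (TKC) estimator.**
If the independent observations `Y i` have Lebesgue densities `f i` that are equicontinuous
at the target quantiles `μ i` with common value `f i (μ i) = c > 0`, and the bandwidths satisfy
`h n → 0` and `n · h n → ∞`, then the TKC estimator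
`Ĉ_n = (1/(n·λ·h_n²)) Σ_{i<n} (h_n − |Y_i − μ_i|)·1{|Y_i − μ_i| < h_n}`
converges in probability to `c / λ`. -/
theorem tkc_consistency
    {Ω : Type*} [MeasurableSpace Ω] (P : Measure Ω) [IsProbabilityMeasure P]
    (lam : ℝ) (hlam : 0 < lam)
    -- independent observations with Lebesgue densities f i
    (Y : ℕ → Ω → ℝ) (hYmeas : ∀ i, Measurable (Y i))
    (hindep : iIndepFun Y P)
    (f : ℕ → ℝ → ℝ) (hfmeas : ∀ i, Measurable (f i)) (hfnonneg : ∀ i y, 0 ≤ f i y)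
    (hdens : ∀ i, Measure.map (Y i) P = volume.withDensity fun y => ENNReal.ofReal (f i y))
    -- constant curvature at the target quantiles
    (μ : ℕ → ℝ) (c : ℝ) (hc : 0 < c) (hfc : ∀ i, f i (μ i) = c)
    -- equicontinuity of the densities at the points μ i
    (hequi : ∀ ε > (0 : ℝ), ∃ η > (0 : ℝ), ∀ i y, |y - μ i| ≤ η → |f i y - f i (μ i)| ≤ ε)
    -- bandwidths
    (h : ℕ → ℝ) (hpos : ∀ n, 0 < h n)
    (hh0 : Tendsto h atTop (nhds 0))
    (hnh : Tendsto (fun n : ℕ => (n : ℝ) * h n) atTop atTop)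
    -- the triangular kernel curvature estimator
    (C : ℕ → Ω → ℝ)
    (hC : ∀ n ω, C n ω = (1 / ((n : ℝ) * lam * (h n) ^ 2)) *
      ∑ i ∈ Finset.range n, if |Y i ω - μ i| < h n then h n - |Y i ω - μ i| else 0) :
    ∀ ε > (0 : ℝ),
      Tendsto (fun n => P {ω | ε < |C n ω - c / lam|}) atTop (nhds 0) := by
  classical
  intro ε hε
  -- kernel and summands
  set g : ℕ → ℕ → ℝ → ℝ := fun n i y => if |y - μ i| < h n then h n - |y - μ i| else 0 with hgdef
  have hgm : ∀ n i, Measurable (g n i) := by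
    intro n i
    have habs : Measurable fun y : ℝ => |y - μ i| := (measurable_id.sub_const (μ i)).abs
    exact Measurable.ite (measurableSet_lt habs measurable_const)
      (measurable_const.sub habs) measurable_const
  have hg0 : ∀ n i y, 0 ≤ g n i y := by
    intro n i y; simp only [hgdef]
    split
    · linarith [le_of_lt ‹|y - μ i| < h n›]
    · exact le_refl 0
  have hgb : ∀ n i y, g n i y ≤ h n := by
    intro n i y; simp only [hgdef]
    split
    · have := abs_nonneg (y - μ i); linarith
    · exact (hpos n).le
  set X : ℕ → ℕ → Ω → ℝ := fun n i ω => g n i (Y i ω) with hXdef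
  have hXm : ∀ n i, Measurable (X n i) := fun n i => (hgm n i).comp (hYmeas i)
  have hXmem : ∀ n i, MemLp (X n i) 2 P := by
    intro n i
    refine MemLp.of_bound (hXm n i).aestronglyMeasurable (h n) (ae_of_all _ fun ω => ?_)
    rw [Real.norm_eq_abs, abs_of_nonneg (hg0 n i _)]
    exact hgb n i _
  have hXint : ∀ n i, Integrable (X n i) P := fun n i => (hXmem n i).integrable one_le_two
  -- expectation formula
  have hE : ∀ (n i : ℕ), ∫ ω, X n i ω ∂P = ∫ y, f i y * g n i y := by
    intro n i
    have h1 : ∫ ω, X n i ω ∂P = ∫ y, g n i y ∂(Measure.map (Y i) P) :=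
      (integral_map (hYmeas i).aemeasurable (hgm n i).aestronglyMeasurable).symm
    rw [h1, hdens i]
    have h2 : (fun y => ENNReal.ofReal (f i y)) = (fun y => ((f i y).toNNReal : ENNReal)) := rfl
    have h3 : Measurable fun y => (f i y).toNNReal := measurable_real_toNNReal.comp (hfmeas i)
    rw [h2, integral_withDensity_eq_integral_smul h3 (g n i)]
    congr 1; funext y
    rw [NNReal.smul_def, Real.coe_toNNReal _ (hfnonneg i y), smul_eq_mul]
  -- equicontinuity constants
  obtain ⟨η₁, hη₁pos, hη₁⟩ := hequi (lam * ε / 2) (by positivity)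
  obtain ⟨η₀, hη₀pos, hη₀⟩ := hequi c hc
  -- bias per summand
  have hbias : ∀ n i, h n ≤ η₁ →
      |(∫ ω, X n i ω ∂P) - c * (h n) ^ 2| ≤ (lam * ε / 2) * (h n) ^ 2 := by
    intro n i hle
    rw [hE n i]
    exact weighted_tri_bound (f i) (hfmeas i) (hfnonneg i) (μ i) c (lam * ε / 2) η₁ (h n)
      (by positivity) (hpos n) hle (fun y hy => (hfc i) ▸ hη₁ i y hy)
  have hEub : ∀ n i, h n ≤ η₀ → (∫ ω, X n i ω ∂P) ≤ 2 * c * (h n) ^ 2 := by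
    intro n i hle
    have := weighted_tri_bound (f i) (hfmeas i) (hfnonneg i) (μ i) c c η₀ (h n)
      hc.le (hpos n) hle (fun y hy => (hfc i) ▸ hη₀ i y hy)
    rw [← hE n i] at this
    have := abs_le.1 this
    nlinarith [this.2]
  -- second moment and variance per summand
  have hsq : ∀ n i, (∫ ω, (X n i ω) ^ 2 ∂P) ≤ h n * ∫ ω, X n i ω ∂P := by
    intro n i
    have hmono : ∀ ω, (X n i ω) ^ 2 ≤ h n * X n i ω := by
      intro ω
      have h0 := hg0 n i (Y i ω)
      have hb := hgb n i (Y i ω)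
      nlinarith
    calc (∫ ω, (X n i ω) ^ 2 ∂P) ≤ ∫ ω, h n * X n i ω ∂P :=
          integral_mono (hXmem n i).integrable_sq ((hXint n i).const_mul (h n)) hmono
      _ = h n * ∫ ω, X n i ω ∂P := integral_const_mul _ _
  have hvar : ∀ n i, h n ≤ η₀ → variance (X n i) P ≤ 2 * c * (h n) ^ 3 := by
    intro n i hle
    have h1 : variance (X n i) P ≤ ∫ ω, (X n i ω) ^ 2 ∂P := by
      have := variance_le_expectation_sq (μ := P) (hXm n i).aestronglyMeasurable
      simpa using this
    calc variance (X n i) P ≤ ∫ ω, (X n i ω) ^ 2 ∂P := h1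
      _ ≤ h n * ∫ ω, X n i ω ∂P := hsq n i
      _ ≤ h n * (2 * c * (h n) ^ 2) :=
          mul_le_mul_of_nonneg_left (hEub n i hle) (hpos n).le
      _ = 2 * c * (h n) ^ 3 := by ring
  -- the sum
  set S : ℕ → Ω → ℝ := fun n => ∑ i ∈ Finset.range n, X n i with hSdef
  have hSmem : ∀ n, MemLp (S n) 2 P := fun n => memLp_finset_sum' _ (fun i _ => hXmem n i)
  have hCS : ∀ n, C n = (((n : ℝ) * lam * (h n) ^ 2)⁻¹) • S n := by
    intro n; funext ω
    rw [hC n ω]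
    simp only [Pi.smul_apply, hSdef, Finset.sum_apply, smul_eq_mul, one_div]
    rfl
  have hSvar : ∀ n, variance (S n) P = ∑ i ∈ Finset.range n, variance (X n i) P := by
    intro n
    exact IndepFun.variance_sum (fun i _ => hXmem n i)
      (fun i _ j _ hij => ((hindep.indepFun hij).comp (hgm n i) (hgm n j)))
  have hCmem : ∀ n, MemLp (C n) 2 P := by
    intro n; rw [hCS n]; exact (hSmem n).const_smul _
  have hCvar : ∀ n, variance (C n) P
      = (((n : ℝ) * lam * (h n) ^ 2)⁻¹) ^ 2 * ∑ i ∈ Finset.range n, variance (X n i) P := by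
    intro n; rw [hCS n, variance_smul, hSvar n]
  have hCE : ∀ n, (∫ ω, C n ω ∂P)
      = (((n : ℝ) * lam * (h n) ^ 2)⁻¹) * ∑ i ∈ Finset.range n, ∫ ω, X n i ω ∂P := by
    intro n
    rw [hCS n]
    simp only [Pi.smul_apply, smul_eq_mul]
    rw [integral_const_mul]
    congr 1
    have : (∫ ω, S n ω ∂P) = ∑ i ∈ Finset.range n, ∫ ω, X n i ω ∂P := by
      simp only [hSdef, Finset.sum_apply]
      exact integral_finset_sum _ (fun i _ => hXint n i)
    exact this
  -- eventual bound
  have hev : ∀ᶠ n in atTop, P {ω | ε < |C n ω - c / lam|}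
      ≤ ENNReal.ofReal ((8 * c / (lam ^ 2 * ε ^ 2)) / ((n : ℝ) * h n)) := by
    have hsm : ∀ᶠ n in atTop, h n < min η₁ η₀ :=
      hh0.eventually_lt_const (lt_min hη₁pos hη₀pos)
    filter_upwards [hsm, eventually_ge_atTop 1] with n hn h1n
    have hn1 : h n ≤ η₁ := le_of_lt (lt_of_lt_of_le hn (min_le_left _ _))
    have hn0 : h n ≤ η₀ := le_of_lt (lt_of_lt_of_le hn (min_le_right _ _))
    have hnpos : (0 : ℝ) < n := by exact_mod_cast h1n
    have hhn := hpos n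
    have hapos : (0 : ℝ) < (n : ℝ) * lam * (h n) ^ 2 := by positivity
    set a : ℝ := ((n : ℝ) * lam * (h n) ^ 2)⁻¹ with hadef
    have hapos' : 0 < a := inv_pos.2 hapos
    -- bias of C n
    have hbiasC : |(∫ ω, C n ω ∂P) - c / lam| ≤ ε / 2 := by
      rw [hCE n]
      have hkey : a * (∑ i ∈ Finset.range n, ∫ ω, X n i ω ∂P) - c / lam
          = a * ∑ i ∈ Finset.range n, ((∫ ω, X n i ω ∂P) - c * (h n) ^ 2) := by
        rw [Finset.sum_sub_distrib, mul_sub, Finset.sum_const, Finset.card_range]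
        rw [nsmul_eq_mul]
        have : c / lam = a * ((n : ℝ) * (c * (h n) ^ 2)) := by
          rw [hadef]
          field_simp
        rw [this]
      rw [hkey, abs_mul, abs_of_pos hapos']
      have hsumb : |∑ i ∈ Finset.range n, ((∫ ω, X n i ω ∂P) - c * (h n) ^ 2)|
          ≤ (n : ℝ) * ((lam * ε / 2) * (h n) ^ 2) := by
        calc |∑ i ∈ Finset.range n, ((∫ ω, X n i ω ∂P) - c * (h n) ^ 2)|
            ≤ ∑ i ∈ Finset.range n, |(∫ ω, X n i ω ∂P) - c * (h n) ^ 2| :=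
              Finset.abs_sum_le_sum_abs _ _
          _ ≤ ∑ i ∈ Finset.range n, (lam * ε / 2) * (h n) ^ 2 :=
              Finset.sum_le_sum (fun i _ => hbias n i hn1)
          _ = (n : ℝ) * ((lam * ε / 2) * (h n) ^ 2) := by
              rw [Finset.sum_const, Finset.card_range, nsmul_eq_mul]
      calc a * |∑ i ∈ Finset.range n, ((∫ ω, X n i ω ∂P) - c * (h n) ^ 2)|
          ≤ a * ((n : ℝ) * ((lam * ε / 2) * (h n) ^ 2)) :=
            mul_le_mul_of_nonneg_left hsumb hapos'.le
        _ = ε / 2 := by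
            rw [hadef]
            field_simp
    -- variance of C n
    have hvarC : variance (C n) P ≤ 2 * c / (lam ^ 2 * ((n : ℝ) * h n)) := by
      rw [hCvar n]
      have hsum : (∑ i ∈ Finset.range n, variance (X n i) P) ≤ (n : ℝ) * (2 * c * (h n) ^ 3) := by
        calc (∑ i ∈ Finset.range n, variance (X n i) P)
            ≤ ∑ i ∈ Finset.range n, 2 * c * (h n) ^ 3 :=
              Finset.sum_le_sum (fun i _ => hvar n i hn0)
          _ = (n : ℝ) * (2 * c * (h n) ^ 3) := by
              rw [Finset.sum_const, Finset.card_range, nsmul_eq_mul]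
      calc a ^ 2 * (∑ i ∈ Finset.range n, variance (X n i) P)
          ≤ a ^ 2 * ((n : ℝ) * (2 * c * (h n) ^ 3)) :=
            mul_le_mul_of_nonneg_left hsum (by positivity)
        _ = 2 * c / (lam ^ 2 * ((n : ℝ) * h n)) := by
            rw [hadef]
            field_simp
    -- set inclusion and Chebyshev
    have hsub : {ω | ε < |C n ω - c / lam|} ⊆ {ω | ε / 2 ≤ |C n ω - ∫ ω', C n ω' ∂P|} := by
      intro ω hω
      simp only [Set.mem_setOf_eq] at hω ⊢
      by_contra hcon
      push_neg at hcon
      have : |C n ω - c / lam| ≤ |C n ω - ∫ ω', C n ω' ∂P| + |(∫ ω', C n ω' ∂P) - c / lam| := by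
        have := abs_sub_le (C n ω) (∫ ω', C n ω' ∂P) (c / lam)
        exact this
      linarith
    calc P {ω | ε < |C n ω - c / lam|} ≤ P {ω | ε / 2 ≤ |C n ω - ∫ ω', C n ω' ∂P|} :=
          measure_mono hsub
      _ ≤ ENNReal.ofReal (variance (C n) P / (ε / 2) ^ 2) :=
          meas_ge_le_variance_div_sq (hCmem n) (half_pos hε)
      _ ≤ ENNReal.ofReal ((8 * c / (lam ^ 2 * ε ^ 2)) / ((n : ℝ) * h n)) := by
          apply ENNReal.ofReal_le_ofReal
          calc variance (C n) P / (ε / 2) ^ 2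
              ≤ (2 * c / (lam ^ 2 * ((n : ℝ) * h n))) / (ε / 2) ^ 2 := by gcongr
            _ = (8 * c / (lam ^ 2 * ε ^ 2)) / ((n : ℝ) * h n) := by
                field_simp
                ring
  have hlim : Tendsto (fun n : ℕ => ENNReal.ofReal ((8 * c / (lam ^ 2 * ε ^ 2)) / ((n : ℝ) * h n)))
      atTop (nhds 0) := by
    have htend : Tendsto (fun n : ℕ => (8 * c / (lam ^ 2 * ε ^ 2)) / ((n : ℝ) * h n))
        atTop (nhds 0) := Tendsto.div_atTop tendsto_const_nhds hnh
    simpa using ENNReal.tendsto_ofReal htend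
  exact tendsto_of_tendsto_of_tendsto_of_le_of_le' tendsto_const_nhds hlim
    (Eventually.of_forall fun n => zero_le) hev
end

section
/- The triangular kernel curvature estimator equals a triangular kernel density estimator of the residuals at zero. Let τ ∈ (0,1), λ > 0, h > 0, n ∈ ℕ, and y, μ ∈ ℝ^n. Define the asymmetric Laplace log-likelihood ℓ(μ) := Σ_{i=1}^n log p(y_i | μ_i, λ), and for the all-ones vector 1 ∈ ℝ^n define the decrease-in-log-likelihood quantities DLL^U := ℓ(μ) − ℓ(μ + h·1) and DLL^L := ℓ(μ) − ℓ(μ − h·1), and the triangular kernel curvature estimator Ĉ_h := (DLL^U + DLL^L)/(n·h²). Then Ĉ_h = (1/(n·λ)) · Σ_{i=1}^n h^{−1} · (1 − |y_i − μ_i|/h) · 1{|y_i − μ_i| < h}, i.e. Ĉ_h equals 1/λ times the kernel density estimator with triangular kernel K(u) = max(1 − |u|, 0) and bandwidth h of the residuals y_i − μ_i, evaluated at zero. -/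
noncomputable section

/-- The pinball (quantile) loss `ρ_τ(u) = u·(τ − 1{u < 0})`. -/
def pinball (τ u : ℝ) : ℝ := u * (τ - if u < 0 then 1 else 0)

/-- The asymmetric Laplace density `p(y | μ, λ) = (τ(1−τ)/λ)·exp(−ρ_τ(y − μ)/λ)`. -/
def aldDensity (τ lam y μ : ℝ) : ℝ :=
  τ * (1 - τ) / lam * Real.exp (-pinball τ (y - μ) / lam)

lemma log_ald (τ lam : ℝ) (hτ0 : 0 < τ) (hτ1 : τ < 1) (hlam : 0 < lam) (y μ : ℝ) :
    Real.log (aldDensity τ lam y μ)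
      = Real.log (τ * (1 - τ) / lam) - pinball τ (y - μ) / lam := by
  unfold aldDensity
  rw [Real.log_mul ((div_pos (mul_pos hτ0 (by linarith)) hlam).ne') (Real.exp_ne_zero _), Real.log_exp]
  ring

lemma pinball_second_diff (τ h r : ℝ) (hh : 0 < h) :
    (pinball τ (r - h) - pinball τ r) + (pinball τ (r + h) - pinball τ r)
      = (if |r| < h then h - |r| else 0) := by
  unfold pinball
  rcases abs_cases r with ⟨ha, hr⟩ | ⟨ha, hr⟩ <;> rw [ha] <;> split_ifs <;> nlinarith

/-- **The TKC estimator equals a triangular kernel density estimator of the residuals at 0.**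
With `ℓ(μ) = Σ_i log p(y_i | μ_i, λ)` the asymmetric Laplace log-likelihood,
`DLL^U = ℓ(μ) − ℓ(μ + h·1)`, `DLL^L = ℓ(μ) − ℓ(μ − h·1)` and
`Ĉ_h = (DLL^U + DLL^L)/(n·h²)`, one has
`Ĉ_h = (1/(n·λ)) Σ_i h⁻¹·(1 − |y_i − μ_i|/h)·1{|y_i − μ_i| < h}`. -/
theorem tkc_eq_triangular_kde
    (τ lam h : ℝ) (hτ : τ ∈ Set.Ioo (0 : ℝ) 1) (hlam : 0 < lam) (hh : 0 < h)
    (n : ℕ) (y μ : Fin n → ℝ)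
    (ℓ : (Fin n → ℝ) → ℝ)
    (hℓ : ∀ v, ℓ v = ∑ i, Real.log (aldDensity τ lam (y i) (v i)))
    (DLLU DLLL Chat : ℝ)
    (hU : DLLU = ℓ μ - ℓ (μ + fun _ => h))
    (hL : DLLL = ℓ μ - ℓ (μ - fun _ => h))
    (hC : Chat = (DLLU + DLLL) / (n * h ^ 2)) :
    Chat = (1 / (n * lam)) *
      ∑ i, h⁻¹ * (1 - |y i - μ i| / h) * (if |y i - μ i| < h then 1 else 0) := by
  obtain ⟨hτ0, hτ1⟩ := hτ
  set S : ℝ := ∑ i, (if |y i - μ i| < h then h - |y i - μ i| else 0) with hS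
  have hsum : DLLU + DLLL = S / lam := by
    rw [hU, hL, hℓ, hℓ, hℓ, hS]
    rw [← Finset.sum_sub_distrib, ← Finset.sum_sub_distrib, ← Finset.sum_add_distrib,
      Finset.sum_div]
    refine Finset.sum_congr rfl fun i _ => ?_
    rw [log_ald τ lam hτ0 hτ1 hlam, log_ald τ lam hτ0 hτ1 hlam,
      log_ald τ lam hτ0 hτ1 hlam]
    have h1 : y i - (μ + (fun _ => h : Fin n → ℝ)) i = (y i - μ i) - h := by
      simp [Pi.add_apply]; ring
    have h2 : y i - (μ - (fun _ => h : Fin n → ℝ)) i = (y i - μ i) + h := by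
      simp [Pi.sub_apply]; ring
    rw [h1, h2]
    have := pinball_second_diff τ h (y i - μ i) hh
    have hlam' := hlam.ne'
    field_simp
    linarith [this]
  have hrhs : ∑ i, h⁻¹ * (1 - |y i - μ i| / h) * (if |y i - μ i| < h then (1:ℝ) else 0)
      = S / h ^ 2 := by
    rw [hS, Finset.sum_div]
    refine Finset.sum_congr rfl fun i _ => ?_
    split_ifs with hi
    · have hne : h ≠ 0 := hh.ne'
      rw [mul_one, eq_div_iff (by positivity)]
      field_simp
    · simp
  rw [hC, hsum, hrhs]
  rcases Nat.eq_zero_or_pos n with hn | hn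
  · subst hn; simp [hS]
  · have hn' : (n : ℝ) ≠ 0 := Nat.cast_ne_zero.mpr hn.ne'
    field_simp
end
end

section
/- Vanishing variance of the averaged triangular kernel density estimator. Let (Y_i)_{i ≥ 1} be independent real random variables with Lebesgue densities f_i, let (μ_i)_{i ≥ 1} be real numbers such that f_i(μ_i) = c for all i and the family {f_i} is equicontinuous at the points μ_i (for every ε > 0 there is η > 0 with |f_i(y) − f_i(μ_i)| ≤ ε whenever |y − μ_i| ≤ η, for all i). Let (h_n) be positive reals with h_n → 0 and n·h_n → ∞, and set X_{n,i} := h_n^{−1}·K((Y_i − μ_i)/h_n) with K the triangular kernel. Then E[X_{n,i}²] ≤ h_n^{−2}·P(|Y_i − μ_i| < h_n) for every i and n, and Var( (1/n)·Σ_{i=1}^n X_{n,i} ) → 0 as n → ∞. -/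
open MeasureTheory Filter ProbabilityTheory

noncomputable section

/-- The triangular kernel `K(u) = max(1 − |u|, 0)`. -/
def triKernel (u : ℝ) : ℝ := max (1 - |u|) 0

lemma triKernel_nonneg (u : ℝ) : 0 ≤ triKernel u := le_max_right _ _
lemma triKernel_le_one (u : ℝ) : triKernel u ≤ 1 := by
  unfold triKernel
  have : 0 ≤ |u| := abs_nonneg u
  simp only [max_le_iff]
  constructor <;> linarith
lemma triKernel_eq_zero {u : ℝ} (hu : 1 ≤ |u|) : triKernel u = 0 := by
  unfold triKernel
  rw [max_eq_right]
  linarith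
lemma measurable_triKernel : Measurable triKernel :=
  (continuous_const.sub continuous_abs).max continuous_const |>.measurable


/-- **Vanishing variance of the averaged triangular kernel density estimator.**
For independent `Y i` with densities `f i` equicontinuous at `μ i` and with common value
`f i (μ i) = c`, bandwidths `h n → 0` with `n·h n → ∞`, and
`X n i = h n⁻¹ · K((Y i − μ i)/h n)`, one has `E[X n i ²] ≤ h n⁻² · P(|Y i − μ i| < h n)`
and `Var((1/n)·Σ_{i<n} X n i) → 0`. -/
theorem triangular_kde_variance_vanishes
    {Ω : Type*} [MeasurableSpace Ω] (P : Measure Ω) [IsProbabilityMeasure P]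
    (Y : ℕ → Ω → ℝ) (hYmeas : ∀ i, Measurable (Y i))
    (hindep : iIndepFun Y P)
    (f : ℕ → ℝ → ℝ) (hfmeas : ∀ i, Measurable (f i)) (hfnonneg : ∀ i y, 0 ≤ f i y)
    (hdens : ∀ i, Measure.map (Y i) P = volume.withDensity fun y => ENNReal.ofReal (f i y))
    (μ : ℕ → ℝ) (c : ℝ) (hfc : ∀ i, f i (μ i) = c)
    (hequi : ∀ ε > (0 : ℝ), ∃ η > (0 : ℝ), ∀ i y, |y - μ i| ≤ η → |f i y - f i (μ i)| ≤ ε)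
    (h : ℕ → ℝ) (hpos : ∀ n, 0 < h n)
    (hh0 : Tendsto h atTop (nhds 0))
    (hnh : Tendsto (fun n : ℕ => (n : ℝ) * h n) atTop atTop)
    (X : ℕ → ℕ → Ω → ℝ)
    (hX : ∀ n i ω, X n i ω = (h n)⁻¹ * triKernel ((Y i ω - μ i) / h n)) :
    (∀ n i, (∫ ω, (X n i ω) ^ 2 ∂P) ≤
        ((h n)⁻¹) ^ 2 * (P {ω | |Y i ω - μ i| < h n}).toReal) ∧
    Tendsto
      (fun n : ℕ =>
        variance (fun ω => (1 / (n : ℝ)) * ∑ i ∈ Finset.range n, X n i ω) P)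
      atTop (nhds 0) := by
  -- basic facts
  have hXnonneg : ∀ n i ω, 0 ≤ X n i ω := fun n i ω => by
    rw [hX]; exact mul_nonneg (inv_nonneg.2 (hpos n).le) (triKernel_nonneg _)
  have hXle : ∀ n i ω, X n i ω ≤ (h n)⁻¹ := fun n i ω => by
    rw [hX]
    calc (h n)⁻¹ * triKernel ((Y i ω - μ i) / h n) ≤ (h n)⁻¹ * 1 :=
      mul_le_mul_of_nonneg_left (triKernel_le_one _) (inv_nonneg.2 (hpos n).le)
    _ = (h n)⁻¹ := mul_one _
  have hXmeas : ∀ n i, Measurable (X n i) := fun n i => by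
    have : X n i = fun ω => (h n)⁻¹ * triKernel ((Y i ω - μ i) / h n) := funext (hX n i)
    rw [this]
    exact (measurable_triKernel.comp (((hYmeas i).sub_const _).div_const _)).const_mul _
  have hSmeas : ∀ n i, MeasurableSet {ω | |Y i ω - μ i| < h n} := fun n i =>
    measurableSet_lt (((hYmeas i).sub_const _).abs) measurable_const
  -- Part 1
  have part1 : ∀ n i, (∫ ω, (X n i ω) ^ 2 ∂P) ≤
      ((h n)⁻¹) ^ 2 * (P {ω | |Y i ω - μ i| < h n}).toReal := by
    intro n i
    have hptwise : ∀ ω, (X n i ω) ^ 2 ≤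
        Set.indicator {ω | |Y i ω - μ i| < h n} (fun _ => ((h n)⁻¹) ^ 2) ω := by
      intro ω
      by_cases hω : |Y i ω - μ i| < h n
      · have hmem : ω ∈ {ω | |Y i ω - μ i| < h n} := hω
        rw [Set.indicator_of_mem hmem]
        exact pow_le_pow_left₀ (hXnonneg n i ω) (hXle n i ω) 2
      · have hmem : ω ∉ {ω | |Y i ω - μ i| < h n} := hω
        rw [Set.indicator_of_notMem hmem]
        have : (1 : ℝ) ≤ |(Y i ω - μ i) / h n| := by
          rw [abs_div, abs_of_pos (hpos n), le_div_iff₀ (hpos n), one_mul]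
          exact le_of_not_gt hω
        rw [hX, triKernel_eq_zero this, mul_zero]
        norm_num
    calc (∫ ω, (X n i ω) ^ 2 ∂P)
        ≤ ∫ ω, Set.indicator {ω | |Y i ω - μ i| < h n} (fun _ => ((h n)⁻¹) ^ 2) ω ∂P := by
          refine integral_mono_of_nonneg (Filter.Eventually.of_forall fun ω => sq_nonneg _)
            ?_ (Filter.Eventually.of_forall hptwise)
          exact (integrable_const _).indicator (hSmeas n i)
      _ = ((h n)⁻¹) ^ 2 * (P {ω | |Y i ω - μ i| < h n}).toReal := by
          rw [integral_indicator_const _ (hSmeas n i), smul_eq_mul, mul_comm]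
          rfl
  refine ⟨part1, ?_⟩
  -- measure bound
  obtain ⟨η, hη, hequi1⟩ := hequi 1 one_pos
  have hc0 : 0 ≤ c := by rw [← hfc 0]; exact hfnonneg 0 _
  have hPbound : ∀ n i, h n ≤ η →
      (P {ω | |Y i ω - μ i| < h n}).toReal ≤ (c + 1) * (2 * h n) := by
    intro n i hn
    have hball : {y : ℝ | |y - μ i| < h n} = Metric.ball (μ i) (h n) := by
      ext y; simp [Metric.mem_ball, Real.dist_eq]
    have hmS : MeasurableSet {y : ℝ | |y - μ i| < h n} := by
      rw [hball]; exact measurableSet_ball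
    have hmap : P {ω | |Y i ω - μ i| < h n}
        = (Measure.map (Y i) P) {y | |y - μ i| < h n} := by
      rw [Measure.map_apply (hYmeas i) hmS]; rfl
    rw [hmap, hdens i, withDensity_apply _ hmS]
    have hle : ∫⁻ y in {y | |y - μ i| < h n}, ENNReal.ofReal (f i y)
        ≤ ENNReal.ofReal (c + 1) * ENNReal.ofReal (2 * h n) := by
      calc ∫⁻ y in {y | |y - μ i| < h n}, ENNReal.ofReal (f i y)
          ≤ ∫⁻ _ in {y | |y - μ i| < h n}, ENNReal.ofReal (c + 1) := by
            refine setLIntegral_mono measurable_const fun y hy => ?_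
            refine ENNReal.ofReal_le_ofReal ?_
            have := hequi1 i y (le_trans (le_of_lt hy) hn)
            rw [hfc i] at this
            linarith [abs_le.1 this |>.2]
        _ = ENNReal.ofReal (c + 1) * volume {y | |y - μ i| < h n} :=
            setLIntegral_const _ _
        _ = ENNReal.ofReal (c + 1) * ENNReal.ofReal (2 * h n) := by
            rw [hball, Real.volume_ball]
    calc (∫⁻ y in {y | |y - μ i| < h n}, ENNReal.ofReal (f i y)).toReal
        ≤ (ENNReal.ofReal (c + 1) * ENNReal.ofReal (2 * h n)).toReal :=
          ENNReal.toReal_mono (by simp [ENNReal.mul_ne_top]) hle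
      _ = (c + 1) * (2 * h n) := by
          rw [← ENNReal.ofReal_mul (by linarith), ENNReal.toReal_ofReal]
          have := (hpos n).le
          nlinarith
  -- Memℒp
  have hmem : ∀ n i, MemLp (X n i) 2 P := fun n i =>
    MemLp.of_bound (hXmeas n i).aestronglyMeasurable ((h n)⁻¹)
      (Filter.Eventually.of_forall fun ω => by
        rw [Real.norm_eq_abs, abs_of_nonneg (hXnonneg n i ω)]; exact hXle n i ω)
  -- variance identity
  have hvar : ∀ n : ℕ, variance (fun ω => (1 / (n : ℝ)) * ∑ i ∈ Finset.range n, X n i ω) P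
      = (1 / (n : ℝ)) ^ 2 * ∑ i ∈ Finset.range n, variance (X n i) P := by
    intro n
    have h1 : (fun ω => (1 / (n : ℝ)) * ∑ i ∈ Finset.range n, X n i ω)
        = (1 / (n : ℝ)) • (∑ i ∈ Finset.range n, X n i) := by
      funext ω; simp [Finset.sum_apply]
    rw [h1, variance_smul]
    congr 1
    have hindep' : iIndepFun
        (fun i => (fun y => (h n)⁻¹ * triKernel ((y - μ i) / h n)) ∘ Y i) P :=
      hindep.comp _ (fun i =>
        (measurable_triKernel.comp ((measurable_id.sub_const _).div_const _)).const_mul _)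
    have hXeq : ∀ i, X n i = (fun y => (h n)⁻¹ * triKernel ((y - μ i) / h n)) ∘ Y i :=
      fun i => funext fun ω => hX n i ω
    refine IndepFun.variance_sum (fun i _ => hmem n i) ?_
    intro i _ j _ hij
    rw [hXeq i, hXeq j]
    exact hindep'.indepFun hij
  -- final bound
  have hbound : ∀ᶠ n : ℕ in atTop,
      variance (fun ω => (1 / (n : ℝ)) * ∑ i ∈ Finset.range n, X n i ω) P
      ≤ 2 * (c + 1) * ((n : ℝ) * h n)⁻¹ := by
    have hev : ∀ᶠ n in atTop, h n ≤ η := by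
      have := hh0.eventually (ge_mem_nhds hη)
      filter_upwards [this] with n hn using hn
    filter_upwards [hev, Filter.eventually_ge_atTop 1] with n hn hn1
    have hn0 : (0 : ℝ) < (n : ℝ) := by exact_mod_cast hn1
    rw [hvar n]
    have hterm : ∀ i ∈ Finset.range n, variance (X n i) P ≤ 2 * (c + 1) * (h n)⁻¹ := by
      intro i _
      calc variance (X n i) P ≤ ∫ ω, (X n i ω) ^ 2 ∂P := by
            have := variance_le_expectation_sq (μ := P) (hXmeas n i).aestronglyMeasurable
            simpa using this
        _ ≤ ((h n)⁻¹) ^ 2 * (P {ω | |Y i ω - μ i| < h n}).toReal := part1 n i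
        _ ≤ ((h n)⁻¹) ^ 2 * ((c + 1) * (2 * h n)) := by
            exact mul_le_mul_of_nonneg_left (hPbound n i hn) (by positivity)
        _ = 2 * (c + 1) * (h n)⁻¹ := by
            have hhne := (hpos n).ne'
            field_simp
    calc (1 / (n : ℝ)) ^ 2 * ∑ i ∈ Finset.range n, variance (X n i) P
        ≤ (1 / (n : ℝ)) ^ 2 * ∑ i ∈ Finset.range n, 2 * (c + 1) * (h n)⁻¹ := by
          exact mul_le_mul_of_nonneg_left (Finset.sum_le_sum hterm) (by positivity)
      _ = 2 * (c + 1) * ((n : ℝ) * h n)⁻¹ := by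
          rw [Finset.sum_const, Finset.card_range]
          have hhn := (hpos n).ne'
          field_simp
          rw [nsmul_eq_mul, mul_div_assoc', mul_div_assoc', mul_div_cancel_left₀ _ hhn]
          ring
  have hlim : Tendsto (fun n : ℕ => 2 * (c + 1) * ((n : ℝ) * h n)⁻¹) atTop (nhds 0) := by
    have := hnh.inv_tendsto_atTop
    have h2 := this.const_mul (2 * (c + 1))
    simpa using h2
  refine squeeze_zero' ?_ hbound hlim
  filter_upwards with n using variance_nonneg _ _

end
end

section
/- Expected Hessian of the latent Gaussian quantile regression criterion. Let τ ∈ (0,1), λ > 0, n, m ∈ ℕ, Z an n×m real matrix, c ∈ ℝ^n, and let Y_1, …, Y_n be real random variables with E|Y_i| < ∞ and Lebesgue densities f_i that are continuous on ℝ. Define G : ℝ^m → ℝ by G(b) := (1/λ)·Σ_{i=1}^n E[ρ_τ(Y_i − (c + Z b)_i)]. Then G is twice continuously differentiable on ℝ^m and for every b ∈ ℝ^m its Hessian is ∇²G(b) = (1/λ)·Zᵀ·D(b)·Z, where D(b) is the n×n diagonal matrix with diagonal entries D(b)_{ii} = f_i((c + Z b)_i). -/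
open MeasureTheory Matrix

noncomputable section

open Set

lemma pinball_abs_sub_le {τ : ℝ} (hτ : τ ∈ Set.Ioo (0:ℝ) 1) (a b : ℝ) :
    |pinball τ a - pinball τ b| ≤ |a - b| := by
  obtain ⟨h0, h1⟩ := hτ
  unfold pinball
  split_ifs with ha hb hb <;> simp -failIfUnchanged only [not_lt] at * <;> rw [abs_le] <;> constructor <;>
    rcases abs_cases (a - b) with ⟨e1, e2⟩ | ⟨e1, e2⟩ <;> nlinarith

lemma pinball_lip_sub {τ : ℝ} (hτ : τ ∈ Set.Ioo (0:ℝ) 1) (y : ℝ) :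
    LipschitzWith 1 (fun x => pinball τ (y - x)) := by
  apply LipschitzWith.of_dist_le_mul
  intro a b
  simp only [Real.dist_eq, NNReal.coe_one, one_mul]
  calc |pinball τ (y - a) - pinball τ (y - b)| ≤ |(y - a) - (y - b)| := pinball_abs_sub_le hτ _ _
    _ = |a - b| := by rw [abs_sub_comm]; ring_nf

lemma measurable_pinball (τ : ℝ) : Measurable (pinball τ) := by
  unfold pinball
  exact measurable_id.mul (measurable_const.sub
    (Measurable.ite measurableSet_Iio measurable_const measurable_const))

lemma abs_pinball_le {τ : ℝ} (hτ : τ ∈ Set.Ioo (0:ℝ) 1) (u : ℝ) : |pinball τ u| ≤ |u| := by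
  have := pinball_abs_sub_le hτ u 0
  simpa [pinball] using this

lemma key_dim1 {Ω : Type*} [MeasurableSpace Ω] (P : Measure Ω) [IsProbabilityMeasure P]
    {τ : ℝ} (hτ : τ ∈ Set.Ioo (0:ℝ) 1)
    (Y : Ω → ℝ) (hY : Measurable Y) (hYint : Integrable Y P)
    (f : ℝ → ℝ) (hf : Continuous f) (hf0 : ∀ y, 0 ≤ f y)
    (hd : Measure.map Y P = volume.withDensity fun y => ENNReal.ofReal (f y)) :
    ∃ g' : ℝ → ℝ,
      (∀ μ, HasDerivAt (fun x => ∫ ω, pinball τ (Y ω - x) ∂P) (g' μ) μ) ∧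
      (∀ μ, HasDerivAt g' (f μ) μ) := by
  -- f is integrable
  have hmap : IsProbabilityMeasure (Measure.map Y P) := Measure.isProbabilityMeasure_map hY.aemeasurable
  rw [hd] at hmap
  have htot : ∫⁻ y, ENNReal.ofReal (f y) = 1 := by
    have := hmap.measure_univ
    rwa [withDensity_apply _ MeasurableSet.univ, setLIntegral_univ] at this
  have hfint : Integrable f volume := by
    refine ⟨hf.aestronglyMeasurable, ?_⟩
    rw [hasFiniteIntegral_iff_ofReal (Filter.Eventually.of_forall hf0), htot]
    exact ENNReal.one_lt_top
  -- singletons are null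
  have hsing : ∀ x : ℝ, P (Y ⁻¹' {x}) = 0 := by
    intro x
    have h1 : Measure.map Y P {x} = P (Y ⁻¹' {x}) :=
      Measure.map_apply hY (measurableSet_singleton x)
    rw [hd, withDensity_apply _ (measurableSet_singleton x),
      setLIntegral_measure_zero _ _ (measure_singleton x)] at h1
    exact h1.symm
  set F : ℝ → ℝ := fun μ => ∫ y in Iic μ, f y with hF
  have hFd : ∀ μ, HasDerivAt F (f μ) μ := by
    intro μ
    have heq : F = fun t => (∫ y in Iic (0:ℝ), f y) + ∫ y in (0:ℝ)..t, f y := by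
      funext t
      rw [← intervalIntegral.integral_Iic_sub_Iic (hfint.integrableOn) (hfint.integrableOn)]
      ring
    rw [heq]
    exact (intervalIntegral.integral_hasDerivAt_right hfint.intervalIntegrable
      (hf.stronglyMeasurableAtFilter _ _) hf.continuousAt).const_add _
  refine ⟨fun μ => F μ - τ, ?_, fun μ => (hFd μ).sub_const τ⟩
  intro μ₀
  -- differentiate under the integral sign
  have hae : ∀ᵐ ω ∂P, Y ω ≠ μ₀ := by
    rw [ae_iff]
    convert hsing μ₀ using 2
    ext ω; simp
  have hmain := hasDerivAt_integral_of_dominated_loc_of_lip (F := fun x ω => pinball τ (Y ω - x))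
    (F' := fun ω => (if Y ω < μ₀ then (1:ℝ) else 0) - τ) (bound := fun _ => (1:ℝ))
    (μ := P) (x₀ := μ₀) (Metric.ball_mem_nhds μ₀ one_pos)
    (Filter.Eventually.of_forall fun x =>
      (((measurable_pinball τ).comp ((hY.sub measurable_const))).aestronglyMeasurable))
    (by
      refine Integrable.mono (hYint.sub (integrable_const μ₀))
        ((measurable_pinball τ).comp (hY.sub measurable_const)).aestronglyMeasurable ?_
      exact Filter.Eventually.of_forall fun ω => by
        simpa [Real.norm_eq_abs] using abs_pinball_le hτ (Y ω - μ₀))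
    (((Measurable.ite (hY measurableSet_Iio) measurable_const measurable_const).sub
      measurable_const).aestronglyMeasurable)
    (Filter.Eventually.of_forall fun ω => by
      have h := (pinball_lip_sub hτ (Y ω)).lipschitzOnWith (s := Metric.ball μ₀ 1)
      convert h using 2
      simp)
    (integrable_const 1)
    (by
      filter_upwards [hae] with ω hne
      rcases lt_or_gt_of_ne hne with hlt | hgt
      · -- Y ω < μ₀ : locally pinball τ (Y ω - x) = (Y ω - x) * (τ - 1)
        have h1 : HasDerivAt (fun x => (Y ω - x) * (τ - 1)) (1 - τ) μ₀ := by
          have := ((hasDerivAt_id μ₀).const_sub (Y ω)).mul_const (τ - 1)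
          exact this.congr_deriv (by ring)
        have h2 : (fun x => pinball τ (Y ω - x)) =ᶠ[nhds μ₀] fun x => (Y ω - x) * (τ - 1) := by
          filter_upwards [eventually_gt_nhds hlt] with x hx
          unfold pinball
          rw [if_pos (sub_neg.2 hx)]
        have := h1.congr_of_eventuallyEq h2
        convert this using 1
        rw [if_pos hlt]
      · -- Y ω > μ₀
        have h1 : HasDerivAt (fun x => (Y ω - x) * τ) (-τ) μ₀ := by
          have := ((hasDerivAt_id μ₀).const_sub (Y ω)).mul_const τ
          exact this.congr_deriv (by ring)
        have h2 : (fun x => pinball τ (Y ω - x)) =ᶠ[nhds μ₀] fun x => (Y ω - x) * τ := by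
          filter_upwards [eventually_lt_nhds hgt] with x hx
          unfold pinball
          rw [if_neg (not_lt.2 (le_of_lt (sub_pos.2 hx))), sub_zero]
        have := h1.congr_of_eventuallyEq h2
        convert this using 1
        rw [if_neg (not_lt.2 (le_of_lt hgt)), zero_sub])
  obtain ⟨-, hder⟩ := hmain
  refine hder.congr_deriv (Eq.symm ?_)
  -- now compute the integral of the derivative
  have hind : (fun ω => (if Y ω < μ₀ then (1:ℝ) else 0)) =
      Set.indicator (Y ⁻¹' Iio μ₀) (fun _ => (1:ℝ)) := by
    funext ω; by_cases h : Y ω < μ₀ <;> simp [Set.indicator_apply, h]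
  have hPio : (P (Y ⁻¹' Iio μ₀)).toReal = ∫ y in Iic μ₀, f y := by
    have h1 : P (Y ⁻¹' Iio μ₀) = Measure.map Y P (Iio μ₀) :=
      (Measure.map_apply hY measurableSet_Iio).symm
    rw [h1, hd, withDensity_apply _ measurableSet_Iio,
      ← ofReal_integral_eq_lintegral_ofReal hfint.integrableOn
        (Filter.Eventually.of_forall fun y => hf0 y),
      ENNReal.toReal_ofReal (integral_nonneg hf0), integral_Iic_eq_integral_Iio]
  rw [integral_sub _ (integrable_const τ), integral_const, probReal_univ]
  · rw [hind, integral_indicator_const _ (hY measurableSet_Iio)]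
    simp [Measure.real, hPio, F]
  · rw [hind]
    exact (integrable_const (1:ℝ)).indicator (hY measurableSet_Iio)

/-- **Expected Hessian of the latent Gaussian quantile regression criterion.**
For `G(b) = (1/λ)·Σ_i E[ρ_τ(Y_i − (c + Z b)_i)]` with integrable `Y_i` having continuous
Lebesgue densities `f_i`, the function `G` is twice continuously differentiable and its
Hessian at `b` is `(1/λ)·Zᵀ·D(b)·Z`, where `D(b)` is diagonal with entries
`f_i((c + Z b)_i)`. -/
theorem expected_hessian_latent_gaussian
    (τ lam : ℝ) (hτ : τ ∈ Set.Ioo (0 : ℝ) 1) (hlam : 0 < lam)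
    (n m : ℕ) (Z : Matrix (Fin n) (Fin m) ℝ) (c : Fin n → ℝ)
    {Ω : Type*} [MeasurableSpace Ω] (P : Measure Ω) [IsProbabilityMeasure P]
    (Y : Fin n → Ω → ℝ) (hYmeas : ∀ i, Measurable (Y i)) (hYint : ∀ i, Integrable (Y i) P)
    (f : Fin n → ℝ → ℝ) (hfcont : ∀ i, Continuous (f i)) (hfnonneg : ∀ i y, 0 ≤ f i y)
    (hdens : ∀ i, Measure.map (Y i) P = volume.withDensity fun y => ENNReal.ofReal (f i y))
    (G : (Fin m → ℝ) → ℝ)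
    (hG : ∀ b, G b = (1 / lam) * ∑ i, ∫ ω, pinball τ (Y i ω - (c + Z.mulVec b) i) ∂P) :
    ContDiff ℝ 2 G ∧
    ∀ (b : Fin m → ℝ) (i j : Fin m),
      iteratedFDeriv ℝ 2 G b ![Pi.single i 1, Pi.single j 1] =
        (1 / lam) * (Zᵀ * Matrix.diagonal (fun k => f k ((c + Z.mulVec b) k)) * Z) i j := by
  classical
  have hkey : ∀ i, ∃ g' : ℝ → ℝ,
      (∀ μ, HasDerivAt (fun x => ∫ ω, pinball τ (Y i ω - x) ∂P) (g' μ) μ) ∧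
      (∀ μ, HasDerivAt g' (f i μ) μ) :=
    fun i => key_dim1 P hτ (Y i) (hYmeas i) (hYint i) (f i) (hfcont i) (hfnonneg i) (hdens i)
  choose gd hgd1 hgd2 using hkey
  set g : Fin n → ℝ → ℝ := fun k x => ∫ ω, pinball τ (Y k ω - x) ∂P with hgdef
  -- the affine maps
  set A : Fin n → (Fin m → ℝ) →L[ℝ] ℝ := fun k =>
    (ContinuousLinearMap.proj k).comp (LinearMap.toContinuousLinearMap (Matrix.mulVecLin Z))
    with hA
  have hAapp : ∀ k b, A k b = Z.mulVec b k := fun k b => rfl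
  set φ : Fin n → (Fin m → ℝ) → ℝ := fun k b => (c + Z.mulVec b) k with hφ
  have hφeq : ∀ k, φ k = fun b => c k + A k b := by
    intro k; funext b; simp [hφ, hAapp]
  have hφd : ∀ k b, HasFDerivAt (φ k) (A k) b := by
    intro k b
    rw [hφeq k]
    exact (A k).hasFDerivAt.const_add (c k)
  have hGeq : G = fun b => (1 / lam) * ∑ k, g k (φ k b) := by
    funext b; rw [hG b]
  -- first derivative
  set Φ : (Fin m → ℝ) → (Fin m → ℝ) →L[ℝ] ℝ :=
    fun x => (1 / lam) • ∑ k, gd k (φ k x) • A k with hΦdef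
  have hGd : ∀ x, HasFDerivAt G (Φ x) x := by
    intro x
    rw [hGeq]
    exact (HasFDerivAt.fun_sum fun k _ =>
      (hgd1 k (φ k x)).comp_hasFDerivAt x (hφd k x)).const_mul (1 / lam)
  have hfdG : fderiv ℝ G = Φ := funext fun x => (hGd x).fderiv
  -- second derivative
  set Ψ : (Fin m → ℝ) → (Fin m → ℝ) →L[ℝ] (Fin m → ℝ) →L[ℝ] ℝ :=
    fun b => (1 / lam) • ∑ k, ((f k (φ k b)) • A k).smulRight (A k) with hΨdef
  have hΦd : ∀ b, HasFDerivAt Φ (Ψ b) b := by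
    intro b
    refine HasFDerivAt.const_smul (HasFDerivAt.fun_sum (u := Finset.univ)
      (A := fun k x => gd k (φ k x) • A k)
      (A' := fun k => ((f k (φ k b)) • A k).smulRight (A k)) fun k _ => ?_) (1 / lam)
    have hh : HasFDerivAt (fun x => gd k (φ k x)) ((f k (φ k b)) • A k) b :=
      (hgd2 k (φ k b)).comp_hasFDerivAt b (hφd k b)
    have := hh.smul (hasFDerivAt_const (A k) b)
    convert this using 1
    · rfl
    simp
  have hfd2 : ∀ b, fderiv ℝ (fderiv ℝ G) b = Ψ b := by
    intro b; rw [hfdG]; exact (hΦd b).fderiv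
  -- smoothness
  have hgC : ∀ k, ContDiff ℝ 2 (g k) := by
    intro k
    have hdg : deriv (g k) = gd k := funext fun x => (hgd1 k x).deriv
    have hdgd : deriv (gd k) = f k := funext fun x => (hgd2 k x).deriv
    rw [show (2 : WithTop ℕ∞) = 1 + 1 from by norm_num, contDiff_succ_iff_deriv]
    refine ⟨fun x => (hgd1 k x).differentiableAt, by simp, ?_⟩
    rw [hdg, contDiff_one_iff_deriv]
    exact ⟨fun x => (hgd2 k x).differentiableAt, hdgd ▸ hfcont k⟩
  have hGC : ContDiff ℝ 2 G := by
    rw [hGeq]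
    exact contDiff_const.mul (ContDiff.sum fun k _ =>
      (hgC k).comp (by rw [hφeq k]; exact contDiff_const.add (A k).contDiff))
  refine ⟨hGC, ?_⟩
  intro b i j
  rw [iteratedFDeriv_two_apply, hfd2 b]
  have hA1 : ∀ (k : Fin n) (i : Fin m), A k (Pi.single i 1) = Z k i := by
    intro k i
    rw [hAapp, Matrix.mulVec_single]
    simp
  have h0 : (![Pi.single i 1, Pi.single j 1] : Fin 2 → Fin m → ℝ) 0 = Pi.single i 1 := rfl
  have h1 : (![Pi.single i 1, Pi.single j 1] : Fin 2 → Fin m → ℝ) 1 = Pi.single j 1 := rfl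
  rw [h0, h1, hΨdef]
  simp only [ContinuousLinearMap.smul_apply, ContinuousLinearMap.coe_sum', Finset.sum_apply,
    ContinuousLinearMap.smulRight_apply, ContinuousLinearMap.smul_apply, smul_eq_mul,
    Finset.sum_apply, hA1]
  rw [Matrix.mul_apply]
  rw [Finset.mul_sum, Finset.mul_sum]
  refine Finset.sum_congr rfl fun k _ => ?_
  rw [Matrix.mul_diagonal, Matrix.transpose_apply]
  ring

end
end
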